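/- (Preservation of Order Preference) Let M be a reciprocal positive matrix with positive principal eigenvector μ and K(M) its Koczkodaj index. If m_{ij} > 1/(1 − K(M)), then μ_i > μ_j. -/
import Mathlib


open Matrix Finset

/-- Koczkodaj's inconsistency index: maximum over distinct triples. -/
noncomputable def kocz {n : ℕ} (M : Matrix (Fin n) (Fin n) ℝ) : ℝ :=
  sSup {x : ℝ | ∃ i j k : Fin n, i ≠ j ∧ j ≠ k ∧ i ≠ k ∧
    x = min |1 - M i j / (M i k * M k j)| |1 - (M i k * M k j) / M i j|}

/-- Ranking error. -/
noncomputable def eps {n : ℕ} (M : Matrix (Fin n) (Fin n) ℝ) (μ : Fin n → ℝ)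
    (i j : Fin n) : ℝ :=
  (1 / M i j) * (μ i / μ j)

/-- Local ranking discrepancy. -/
noncomputable def locE {n : ℕ} (M : Matrix (Fin n) (Fin n) ℝ) (μ : Fin n → ℝ)
    (i j : Fin n) : ℝ :=
  max (eps M μ i j - 1) (1 / eps M μ i j - 1)

/-- Global ranking discrepancy. -/
noncomputable def disc {n : ℕ} (M : Matrix (Fin n) (Fin n) ℝ) (μ : Fin n → ℝ) : ℝ :=
  sSup {x : ℝ | ∃ i j : Fin n, x = locE M μ i j}

lemma min_abs_lt_one {a b : ℝ} (ha : 0 < a) (hb : 0 < b) :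
    min |1 - a / b| |1 - b / a| < 1 := by
  rcases le_total a b with hab | hab
  · refine min_lt_of_left_lt ?_
    rw [abs_lt]
    constructor
    · have h1 : a / b ≤ 1 := by rw [div_le_one hb]; exact hab
      linarith
    · have h2 : 0 < a / b := div_pos ha hb
      linarith
  · refine min_lt_of_right_lt ?_
    rw [abs_lt]
    constructor
    · have h1 : b / a ≤ 1 := by rw [div_le_one ha]; exact hab
      linarith
    · have h2 : 0 < b / a := div_pos hb ha
      linarith

theorem pop_condition {n : ℕ} (hn : 2 < n) (M : Matrix (Fin n) (Fin n) ℝ)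
    (hpos : ∀ i j, 0 < M i j) (hrec : ∀ i j, M i j = 1 / M j i)
    (μ : Fin n → ℝ) (hμ : ∀ i, 0 < μ i) (lmax : ℝ)
    (hev : M.mulVec μ = lmax • μ)
    (i j : Fin n) (h : M i j > 1 / (1 - kocz M)) :
    μ i > μ j := by
  set S : Set ℝ := {x : ℝ | ∃ i j k : Fin n, i ≠ j ∧ j ≠ k ∧ i ≠ k ∧
    x = min |1 - M i j / (M i k * M k j)| |1 - (M i k * M k j) / M i j|} with hSdef
  have hkoczS : kocz M = sSup S := rfl
  have hfin : S.Finite := by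
    apply Set.Finite.subset (Set.finite_range (fun p : Fin n × Fin n × Fin n =>
      min |1 - M p.1 p.2.1 / (M p.1 p.2.2 * M p.2.2 p.2.1)|
          |1 - (M p.1 p.2.2 * M p.2.2 p.2.1) / M p.1 p.2.1|))
    rintro x ⟨a, b, c, -, -, -, rfl⟩
    exact ⟨(a, b, c), rfl⟩
  have hbdd : BddAbove S := hfin.bddAbove
  have hne : S.Nonempty := by
    refine ⟨_, ⟨0, by omega⟩, ⟨1, by omega⟩, ⟨2, by omega⟩, ?_, ?_, ?_, rfl⟩
    · simp [Fin.ext_iff]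
    · simp [Fin.ext_iff]
    · simp [Fin.ext_iff]
  have hmem_nonneg : ∀ x ∈ S, 0 ≤ x := by
    rintro x ⟨a, b, c, -, -, -, rfl⟩
    exact le_min (abs_nonneg _) (abs_nonneg _)
  have hK0 : 0 ≤ kocz M := by
    obtain ⟨x, hx⟩ := hne
    exact le_trans (hmem_nonneg x hx) (hkoczS ▸ le_csSup hbdd hx)
  have hK1 : kocz M < 1 := by
    rw [hkoczS]
    obtain ⟨a, b, c, -, -, -, heq⟩ := hne.csSup_mem hfin
    rw [heq]
    exact min_abs_lt_one (hpos a b) (mul_pos (hpos a c) (hpos c b))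
  have h1K : 0 < 1 - kocz M := by linarith
  have hdiag : ∀ a, M a a = 1 := by
    intro a
    have h2 := hrec a a
    have hp := hpos a a
    field_simp at h2
    have h3 : (M a a - 1) * (M a a + 1) = 0 := by nlinarith
    rcases mul_eq_zero.mp h3 with h4 | h4
    · linarith
    · linarith
  have hij : i ≠ j := by
    intro he
    rw [he, hdiag j] at h
    have := (div_lt_one h1K).mp h
    linarith
  have hkey : ∀ k, M i j * (1 - kocz M) * (M j k * μ k) ≤ M i k * μ k := by
    intro k
    by_cases hki : k = i
    · subst hki
      rw [hdiag, hrec j k]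
      have hp := hpos k j
      rw [show M k j * (1 - kocz M) * (1 / M k j * μ k)
          = (1 - kocz M) * μ k * (M k j / M k j) by ring,
        div_self (ne_of_gt hp), mul_one, one_mul]
      nlinarith [hμ k, hK0]
    · by_cases hkj : k = j
      · subst hkj
        rw [hdiag]
        nlinarith [hμ k, hpos i k, hK0, mul_nonneg (mul_nonneg (hpos i k).le hK0) (hμ k).le]
      · have hmemS : min |1 - M i j / (M i k * M k j)| |1 - (M i k * M k j) / M i j| ∈ S :=
          ⟨i, j, k, hij, Ne.symm hkj, Ne.symm hki, rfl⟩
        have hle : min |1 - M i j / (M i k * M k j)| |1 - (M i k * M k j) / M i j| ≤ kocz M :=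
          hkoczS ▸ le_csSup hbdd hmemS
        have hm : 0 < M i j := hpos i j
        have ht : 0 < M i k * M k j := mul_pos (hpos i k) (hpos k j)
        have htm : M i j * (1 - kocz M) ≤ M i k * M k j := by
          rcases min_le_iff.mp hle with hc | hc
          · have h5 := (abs_le.mp hc).1
            have h6 : M i j / (M i k * M k j) ≤ 1 + kocz M := by linarith
            have h7 : M i j ≤ (1 + kocz M) * (M i k * M k j) := by
              rw [div_le_iff₀ ht] at h6; linarith [h6]
            nlinarith [mul_nonneg ht.le (sq_nonneg (kocz M)), h1K]
          · have h5 := (abs_le.mp hc).2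
            have h6 : 1 - kocz M ≤ (M i k * M k j) / M i j := by linarith
            rw [le_div_iff₀ hm] at h6
            linarith
        rw [hrec j k]
        rw [show M i j * (1 - kocz M) * (1 / M k j * μ k)
            = (M i j * (1 - kocz M) * μ k) / M k j by ring,
          div_le_iff₀ (hpos k j)]
        nlinarith [mul_le_mul_of_nonneg_right htm (hμ k).le]
  have hsum := Finset.sum_le_sum (fun k (_ : k ∈ Finset.univ) => hkey k)
  rw [← Finset.mul_sum] at hsum
  have hmi : ∑ k, M i k * μ k = lmax * μ i := by
    have := congrFun hev i
    simpa [Matrix.mulVec, dotProduct] using this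
  have hmj : ∑ k, M j k * μ k = lmax * μ j := by
    have := congrFun hev j
    simpa [Matrix.mulVec, dotProduct] using this
  rw [hmi, hmj] at hsum
  have hlpos : 0 < lmax * μ i := by
    rw [← hmi]
    exact Finset.sum_pos (fun k _ => mul_pos (hpos i k) (hμ k)) ⟨i, Finset.mem_univ i⟩
  have hl : 0 < lmax := by nlinarith [hμ i]
  have hMK : 1 < M i j * (1 - kocz M) := by
    rw [gt_iff_lt, div_lt_iff₀ h1K] at h
    linarith
  have hfinal : lmax * μ j < lmax * μ i := by
    nlinarith [mul_pos hl (hμ j)]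
  exact lt_of_mul_lt_mul_left hfinal hl.le
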